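/- If r is a universal infinite distance matrix, then the metric completion of (ℕ, r) is a Polish space into which every finite metric space embeds isometrically extending any partial isometry: for any finite distance matrix q of order N whose n×n NW-corner equals p_n(r) (n < N) and any ε > 0, there exist natural numbers i_{n+1},...,i_N such that the distance matrix of the points 1,...,n, i_{n+1},...,i_N differs from q in each entry by less than ε. -/

import Mathlib

/-- A distance matrix of order `n`: symmetric, zero diagonal, nonnegative,
satisfying all triangle inequalities. -/
def IsDistMatrix {n : ℕ} (r : Fin n → Fin n → ℝ) : Prop :=
  (∀ i, r i i = 0) ∧ (∀ i j, r i j = r j i) ∧ (∀ i j, 0 ≤ r i j) ∧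
  (∀ i j k, r i j ≤ r i k + r k j)

/-- `a` is an admissible vector for the distance matrix `r`. -/
def Admissible {n : ℕ} (r : Fin n → Fin n → ℝ) (a : Fin n → ℝ) : Prop :=
  ∀ i j, |a i - a j| ≤ r i j ∧ r i j ≤ a i + a j


/-- An infinite distance matrix on the natural numbers. -/
def IsInfDistMatrix (r : ℕ → ℕ → ℝ) : Prop :=
  (∀ i, r i i = 0) ∧ (∀ i j, r i j = r j i) ∧ (∀ i j, 0 ≤ r i j) ∧
  (∀ i j k, r i j ≤ r i k + r k j)

/-- The NW-corner of order `n` of an infinite matrix. -/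
def corner (r : ℕ → ℕ → ℝ) (n : ℕ) : Fin n → Fin n → ℝ := fun i j => r i j

/-- `r` is a universal distance matrix: for every `n`, the columns
`(r_{1,m},…,r_{n,m})`, `m > n`, are dense in the set of admissible vectors of
the NW-corner of order `n`. -/
def IsUniversal (r : ℕ → ℕ → ℝ) : Prop :=
  ∀ (n : ℕ) (a : Fin n → ℝ), Admissible (corner r n) a →
    ∀ ε > (0 : ℝ), ∃ m : ℕ, n ≤ m ∧ ∀ i : Fin n, |r i m - a i| < ε

/-!
Build the embedding one point at a time. If the points placed so far realise the target
distances up to an error `D`, then the distances `a k` from the next target point to them form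
a vector that is admissible up to `D`. Its Katětov extension `x ↦ D + min_k (a k + r x (ψ k))` is
an exactly admissible function on all of `ℕ` and lies within `D` of `a` on the placed points, so by
universality some column of `r` approximates it within `η` on an initial segment containing
them. Each new point thus costs an extra error `η`, and `N` points cost `N η`.
-/

open Finset

section Katetov

variable {α ι : Type*} (d : α → α → ℝ) (ψ : ι → α) (a : ι → ℝ)

def IsKatetov (f : α → ℝ) : Prop :=
  ∀ x y, |f x - f y| ≤ d x y ∧ d x y ≤ f x + f y

/-- For a pseudometric `d`, the largest `1`-Lipschitz function with `f (ψ k) ≤ a k`. -/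
noncomputable def katetovExtension (x : α) : ℝ :=
  ⨅ j, a j + d x (ψ j)

variable {d ψ a}

lemma sub_le_katetovExtension_apply [Nonempty ι] {D : ℝ}
    (h : ∀ k l, a k ≤ a l + d (ψ k) (ψ l) + D) (k : ι) :
    a k - D ≤ katetovExtension d ψ a (ψ k) :=
  le_ciInf fun l => by linarith [h k l]

variable [Finite ι]

lemma katetovExtension_le (x : α) (j : ι) : katetovExtension d ψ a x ≤ a j + d x (ψ j) :=
  ciInf_le (Finite.bddBelow_range _) j

lemma katetovExtension_apply_le (hdiag : ∀ x, d x x = 0) (k : ι) :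
    katetovExtension d ψ a (ψ k) ≤ a k := by
  simpa [hdiag] using katetovExtension_le (d := d) (ψ := ψ) (a := a) (ψ k) k

variable [Nonempty ι]

lemma exists_katetovExtension_eq (x : α) : ∃ j, katetovExtension d ψ a x = a j + d x (ψ j) :=
  (exists_eq_ciInf_of_finite).imp fun _ h => h.symm

lemma katetovExtension_le_add (htri : ∀ x y z, d x y ≤ d x z + d z y) (x y : α) :
    katetovExtension d ψ a x ≤ katetovExtension d ψ a y + d x y := by
  obtain ⟨j, hj⟩ := exists_katetovExtension_eq (d := d) (ψ := ψ) (a := a) y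
  have := katetovExtension_le (d := d) (ψ := ψ) (a := a) x j
  linarith [htri x (ψ j) y]

lemma le_katetovExtension_add_add {D : ℝ} (hsymm : ∀ x y, d x y = d y x)
    (htri : ∀ x y z, d x y ≤ d x z + d z y) (h : ∀ k l, d (ψ k) (ψ l) ≤ a k + a l + D)
    (x y : α) : d x y ≤ katetovExtension d ψ a x + katetovExtension d ψ a y + D := by
  obtain ⟨j, hj⟩ := exists_katetovExtension_eq (d := d) (ψ := ψ) (a := a) x
  obtain ⟨l, hl⟩ := exists_katetovExtension_eq (d := d) (ψ := ψ) (a := a) y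
  linarith [htri x y (ψ j), htri (ψ j) y (ψ l), hsymm (ψ l) y, h j l]

lemma isKatetov_const_add_katetovExtension {D : ℝ} (hD : 0 ≤ D) (hsymm : ∀ x y, d x y = d y x)
    (htri : ∀ x y z, d x y ≤ d x z + d z y) (h : ∀ k l, d (ψ k) (ψ l) ≤ a k + a l + D) :
    IsKatetov d fun x => D + katetovExtension d ψ a x := by
  intro x y
  refine ⟨abs_sub_le_iff.2 ⟨?_, ?_⟩, ?_⟩
  · linarith [katetovExtension_le_add (ψ := ψ) (a := a) htri x y]
  · linarith [katetovExtension_le_add (ψ := ψ) (a := a) htri y x, hsymm x y]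
  · linarith [le_katetovExtension_add_add hsymm htri h x y]

end Katetov

variable {r : ℕ → ℕ → ℝ}

lemma IsUniversal.exists_near_katetov (hu : IsUniversal r) {f : ℕ → ℝ} (hf : IsKatetov r f)
    (n : ℕ) {η : ℝ} (hη : 0 < η) : ∃ p, ∀ i < n, |r i p - f i| < η := by
  obtain ⟨p, -, hp⟩ := hu n (fun i => f i) (fun i j => hf i j) η hη
  exact ⟨p, fun i hi => hp ⟨i, hi⟩⟩

lemma exists_abs_sub_lt_of_almost_admissible (hr : IsInfDistMatrix r) (hu : IsUniversal r)
    {ι : Type*} [Finite ι] (ψ : ι → ℕ) (a : ι → ℝ) {D η : ℝ} (hη : 0 < η)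
    (h₁ : ∀ k l, r (ψ k) (ψ l) ≤ a k + a l + D) (h₂ : ∀ k l, a k ≤ a l + r (ψ k) (ψ l) + D) :
    ∃ p, ∀ k, |r (ψ k) p - a k| < D + η := by
  cases isEmpty_or_nonempty ι
  · exact ⟨0, isEmptyElim⟩
  obtain ⟨hdiag, hsymm, -, htri⟩ := hr
  have hD : 0 ≤ D := by
    have := h₂ (Classical.arbitrary ι) (Classical.arbitrary ι)
    rw [hdiag] at this
    linarith
  obtain ⟨n, hn⟩ := (Finite.bddAbove_range ψ).exists_ge 0
  obtain ⟨p, hp⟩ := hu.exists_near_katetov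
    (isKatetov_const_add_katetovExtension hD hsymm htri h₁) (n + 1) hη
  refine ⟨p, fun k => ?_⟩
  have hpk := hp (ψ k) (Nat.lt_succ_of_le (hn.2 _ ⟨k, rfl⟩))
  have hk₁ := katetovExtension_apply_le (ψ := ψ) (a := a) hdiag k
  have hk₂ := sub_le_katetovExtension_apply h₂ k
  rw [abs_sub_lt_iff] at hpk ⊢
  constructor <;> linarith

section Approx

variable {N : ℕ} {q : Fin N → Fin N → ℝ}

def ApproxOn (r : ℕ → ℕ → ℝ) (q : Fin N → Fin N → ℝ) (φ : Fin N → ℕ) (S : Finset (Fin N))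
    (D : ℝ) : Prop :=
  ∀ k ∈ S, ∀ s ∈ S, |r (φ k) (φ s) - q k s| ≤ D

lemma ApproxOn.mono {φ : Fin N → ℕ} {S : Finset (Fin N)} {D D' : ℝ}
    (h : ApproxOn r q φ S D) (hD : D ≤ D') : ApproxOn r q φ S D' :=
  fun k hk s hs => (h k hk s hs).trans hD

lemma ApproxOn.exists_next (hr : IsInfDistMatrix r) (hu : IsUniversal r) (hq : IsDistMatrix q)
    {φ : Fin N → ℕ} {S : Finset (Fin N)} {D η : ℝ} (h : ApproxOn r q φ S D) (hη : 0 < η)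
    (j : Fin N) : ∃ p, ∀ k ∈ S, |r (φ k) p - q k j| < D + η := by
  obtain ⟨-, hqsymm, -, hqtri⟩ := hq
  obtain ⟨p, hp⟩ := exists_abs_sub_lt_of_almost_admissible (D := D) hr hu (fun k : S => φ k)
    (fun k => q k j) hη
    (fun k l => by linarith [(abs_le.1 (h k k.2 l l.2)).2, hqtri k l j, hqsymm j l])
    (fun k l => by linarith [(abs_le.1 (h k k.2 l l.2)).1, hqtri k j l, hqsymm j l])
  exact ⟨p, fun k hk => hp ⟨k, hk⟩⟩

lemma ApproxOn.insert_update (hr : IsInfDistMatrix r) (hq : IsDistMatrix q)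
    {φ : Fin N → ℕ} {S : Finset (Fin N)} {D : ℝ} (h : ApproxOn r q φ S D) (hD : 0 ≤ D)
    {j : Fin N} (hj : j ∉ S) {p : ℕ} (hp : ∀ k ∈ S, |r (φ k) p - q k j| ≤ D) :
    ApproxOn r q (Function.update φ j p) (insert j S) D := by
  have hφ : ∀ k ∈ S, Function.update φ j p k = φ k := fun k hk =>
    Function.update_of_ne (ne_of_mem_of_not_mem hk hj) _ _
  intro k hk s hs
  rw [Finset.mem_insert] at hk hs
  rcases hk with rfl | hkS <;> rcases hs with rfl | hsS
  · simpa [hr.1, hq.1] using hD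
  · rw [Function.update_self, hφ s hsS, hr.2.1, hq.2.1]
    exact hp s hsS
  · rw [Function.update_self, hφ k hkS]
    exact hp k hkS
  · rw [hφ k hkS, hφ s hsS]
    exact h k hkS s hsS

lemma exists_approxOn_union (hr : IsInfDistMatrix r) (hu : IsUniversal r) (hq : IsDistMatrix q)
    {S₀ : Finset (Fin N)} {φ₀ : Fin N → ℕ} (h₀ : ApproxOn r q φ₀ S₀ 0) {η : ℝ} (hη : 0 < η)
    (T : Finset (Fin N)) :
    ∃ φ : Fin N → ℕ, (∀ k ∈ S₀, φ k = φ₀ k) ∧ ApproxOn r q φ (S₀ ∪ T) (#T * η) := by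
  induction T using Finset.induction_on with
  | empty => exact ⟨φ₀, fun _ _ => rfl, by simpa using h₀⟩
  | insert j T hjT ih =>
    obtain ⟨φ, hφ₀, hφ⟩ := ih
    have hcard : (#(insert j T) : ℝ) * η = #T * η + η := by
      rw [Finset.card_insert_of_notMem hjT]
      push_cast
      ring
    rw [hcard, Finset.union_insert]
    by_cases hj : j ∈ S₀ ∪ T
    · rw [Finset.insert_eq_of_mem hj]
      exact ⟨φ, hφ₀, hφ.mono (by linarith)⟩
    obtain ⟨p, hp⟩ := hφ.exists_next hr hu hq hη j
    refine ⟨Function.update φ j p, fun k hk => ?_, ?_⟩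
    · rw [Function.update_of_ne (ne_of_mem_of_not_mem (Finset.mem_union_left T hk) hj)]
      exact hφ₀ k hk
    · exact (hφ.mono (by linarith)).insert_update hr hq (by positivity) hj
        fun k hk => (hp k hk).le

end Approx

theorem stmt18 (r : ℕ → ℕ → ℝ) (hr : IsInfDistMatrix r) (hu : IsUniversal r)
    {n N : ℕ} (hnN : n < N) (q : Fin N → Fin N → ℝ) (hq : IsDistMatrix q)
    (hcorner : ∀ i j : Fin n, q (Fin.castLE hnN.le i) (Fin.castLE hnN.le j) = r i j) :
    ∀ ε > (0 : ℝ), ∃ φ : Fin N → ℕ,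
      (∀ i : Fin n, φ (Fin.castLE hnN.le i) = (i : ℕ)) ∧
      ∀ k s : Fin N, |r (φ k) (φ s) - q k s| < ε := by
  intro ε hε
  set S₀ : Finset (Fin N) := {k | (k : ℕ) < n}
  have h₀ : ApproxOn r q (fun k => k) S₀ 0 := by
    intro k hk s hs
    rw [Finset.mem_filter] at hk hs
    have hks : q k s = r k s := hcorner ⟨k, hk.2⟩ ⟨s, hs.2⟩
    simp [hks]
  have hη : 0 < ε / (N + 1) := by positivity
  obtain ⟨φ, hφ₀, hφ⟩ := exists_approxOn_union hr hu hq h₀ hη Finset.univ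
  refine ⟨φ, fun i => hφ₀ _ (by simp [S₀]), fun k s => ?_⟩
  calc |r (φ k) (φ s) - q k s| ≤ N * (ε / (N + 1)) := by
        simpa using hφ k (by simp) s (by simp)
    _ < ε := by
        rw [mul_div_assoc', div_lt_iff₀ (by positivity)]
        nlinarith
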